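/- arXiv:1912.12625 — 2 statements merged into one kernel-verified Lean document; each statement's English description precedes it below -/
import Mathlib

section
/- Let λ > 0, c > 0, t > 0, 0 < u < ct, and define F(u,t) = ∑_{k=0}^∞ (λ/(2c))^{2k} (c²t² − u²)^k / (k!)². Then the three-dimensional density in its second form satisfies the decomposition (e^{−λt}/c) [ λ F + ∂F/∂t + (2c²/λ) ∂²F/∂u² + (4c²/λ²) ∂³F/(∂t ∂u²) ](u,t) = ∑_{k=1}^∞ e^{−λt} ((λt)^{2k+1}/(2k+1)!) · ((2k+1)!/(2^{2k}(ct)^{2k+1}(k−1)!(k+1)!)) · (c²t² − u²)^{k−1}(c²t² + u²) + ∑_{k=1}^∞ e^{−λt} ((λt)^{2k+2}/(2k+2)!) · ((2k+2)!/((k+2)!(k−1)!)) · (c²t² − u²)^{k−1}(c²t² + 3u²) / (2ct)^{2k+1}. -/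
/-- `F(u,t) = ∑_{k=0}^∞ (λ/(2c))^{2k} (c²t² − u²)^k / (k!)²`,
which equals `I₀((λ/c)√(c²t² − u²))` for `|u| ≤ ct`. -/
noncomputable def F (lam c u t : ℝ) : ℝ :=
  ∑' k : ℕ, (lam / (2 * c)) ^ (2 * k) * (c ^ 2 * t ^ 2 - u ^ 2) ^ k /
    ((Nat.factorial k : ℝ)) ^ 2

/-!
Put `Φₘ(x) = ∑ₖ xᵏ / (k! (k+m)!)`, so that `F(u,t) = Φ₀(w)` with `w = (λ/2c)² (c²t² − u²)`.
Since `Φₘ' = Φₘ₊₁`, the left-hand side is a combination of `Φ₀(w), …, Φ₃(w)`, while both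
Poisson series are, term by term, multiples of `Φ₂(w)` and `Φ₃(w)`. The recurrence
`x Φₘ₊₂(x) = Φₘ(x) − (m+1) Φₘ₊₁(x)` eliminates `Φ₀` and `Φ₁`, and what remains is an identity of
rational functions in `λ, c, t, u`.
-/

open Nat

-- `besselSeries m` is `Φₘ`; for `x > 0`, `Φₘ(x) = x^(-m/2) Iₘ(2√x)`.
noncomputable def besselSeries (m : ℕ) (x : ℝ) : ℝ :=
  ∑' k : ℕ, x ^ k / (k ! * (k + m)! : ℝ)

lemma abs_besselSeries_term_le (m k : ℕ) (x : ℝ) :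
    |x ^ k / (k ! * (k + m)! : ℝ)| ≤ |x| ^ k / k ! := by
  have hpos : (0 : ℝ) < k ! * (k + m)! := by positivity
  rw [abs_div, abs_pow, abs_of_pos hpos]
  gcongr
  exact le_mul_of_one_le_right (by positivity) (mod_cast (k + m).factorial_pos)

lemma summable_besselSeries (m : ℕ) (x : ℝ) :
    Summable fun k : ℕ => x ^ k / (k ! * (k + m)! : ℝ) :=
  (Real.summable_pow_div_factorial |x|).of_norm_bounded (abs_besselSeries_term_le m · x)

lemma besselSeries_eq_inv_factorial_add (m : ℕ) (x : ℝ) :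
    besselSeries m x =
      (m ! : ℝ)⁻¹ + ∑' k : ℕ, x ^ (k + 1) / ((k + 1)! * (k + 1 + m)! : ℝ) := by
  rw [besselSeries, (summable_besselSeries m x).tsum_eq_zero_add]
  simp

lemma hasDerivAt_besselSeries_succ_term (m k : ℕ) (x : ℝ) :
    HasDerivAt (fun y : ℝ => y ^ (k + 1) / ((k + 1)! * (k + 1 + m)! : ℝ))
      (x ^ k / (k ! * (k + (m + 1))! : ℝ)) x := by
  refine ((hasDerivAt_pow (k + 1) x).div_const ((k + 1)! * (k + 1 + m)! : ℝ)).congr_deriv ?_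
  rw [show k + 1 + m = k + (m + 1) by omega, Nat.factorial_succ]
  push_cast
  field_simp

theorem hasDerivAt_besselSeries (m : ℕ) (x : ℝ) :
    HasDerivAt (besselSeries m) (besselSeries (m + 1) x) x := by
  have hx : x ∈ Metric.ball (0 : ℝ) (|x| + 1) := by simp
  have key := hasDerivAt_tsum_of_isPreconnected (Real.summable_pow_div_factorial (|x| + 1))
    Metric.isOpen_ball (convex_ball (0 : ℝ) _).isPreconnected
    (fun k y _ => hasDerivAt_besselSeries_succ_term m k y) ?_ hx ?_ hx
  · simp only [funext (besselSeries_eq_inv_factorial_add m)]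
    exact key.const_add _
  · intro k y hy
    refine (abs_besselSeries_term_le (m + 1) k y).trans ?_
    gcongr
    simpa using (mem_ball_zero_iff.mp hy).le
  · exact (summable_nat_add_iff 1).mpr (summable_besselSeries m x)

lemma besselSeries_term_sub_succ (m k : ℕ) (x : ℝ) :
    x ^ (k + 1) / ((k + 1)! * (k + 1 + m)! : ℝ) -
        (m + 1) * (x ^ (k + 1) / ((k + 1)! * (k + 1 + (m + 1))! : ℝ)) =
      x * (x ^ k / (k ! * (k + (m + 2))! : ℝ)) := by
  rw [show k + 1 + (m + 1) = k + (m + 2) by omega, show k + 1 + m = k + m + 1 by omega,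
    show k + (m + 2) = k + m + 1 + 1 by omega]
  simp only [Nat.factorial_succ]
  push_cast
  field_simp
  ring

theorem besselSeries_recurrence (m : ℕ) (x : ℝ) :
    x * besselSeries (m + 2) x = besselSeries m x - (m + 1) * besselSeries (m + 1) x := by
  have hsum := (summable_besselSeries m x).sub
    ((summable_besselSeries (m + 1) x).mul_left ((m : ℝ) + 1))
  rw [besselSeries, besselSeries, besselSeries, ← tsum_mul_left, ← tsum_mul_left,
    ← (summable_besselSeries m x).tsum_sub ((summable_besselSeries (m + 1) x).mul_left _),
    hsum.tsum_eq_zero_add]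
  simp only [besselSeries_term_sub_succ, pow_zero, zero_add, Nat.factorial_succ m]
  push_cast
  field_simp
  ring

theorem HasDerivAt.besselSeries (m : ℕ) {f : ℝ → ℝ} {f' x : ℝ}
    (hf : HasDerivAt f f' x) :
    HasDerivAt (fun y => besselSeries m (f y)) (besselSeries (m + 1) (f x) * f') x :=
  (hasDerivAt_besselSeries m (f x)).comp x hf

lemma F_eq_besselSeries (lam c u t : ℝ) :
    F lam c u t = besselSeries 0 ((lam / (2 * c)) ^ 2 * (c ^ 2 * t ^ 2 - u ^ 2)) :=
  tsum_congr fun k => by rw [mul_pow, ← pow_mul, add_zero, ← sq]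

section

variable (r c : ℝ)

lemma hasDerivAt_besselSeries_time (m : ℕ) (u t : ℝ) :
    HasDerivAt (fun s => besselSeries m (r * (c ^ 2 * s ^ 2 - u ^ 2)))
      (besselSeries (m + 1) (r * (c ^ 2 * t ^ 2 - u ^ 2)) * (r * (c ^ 2 * (2 * t)))) t := by
  refine HasDerivAt.besselSeries m (((hasDerivAt_pow 2 t).const_mul (c ^ 2)).sub_const (u ^ 2)
    |>.const_mul r |>.congr_deriv ?_)
  norm_num

lemma hasDerivAt_besselSeries_space (m : ℕ) (t u : ℝ) :
    HasDerivAt (fun v => besselSeries m (r * (c ^ 2 * t ^ 2 - v ^ 2)))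
      (besselSeries (m + 1) (r * (c ^ 2 * t ^ 2 - u ^ 2)) * (r * -(2 * u))) u := by
  refine HasDerivAt.besselSeries m (((hasDerivAt_pow 2 u).const_sub (c ^ 2 * t ^ 2))
    |>.const_mul r |>.congr_deriv ?_)
  norm_num

lemma iteratedDeriv_two_besselSeries_space (t u : ℝ) :
    iteratedDeriv 2 (fun v => besselSeries 0 (r * (c ^ 2 * t ^ 2 - v ^ 2))) u =
      4 * r ^ 2 * u ^ 2 * besselSeries 2 (r * (c ^ 2 * t ^ 2 - u ^ 2)) -
        2 * r * besselSeries 1 (r * (c ^ 2 * t ^ 2 - u ^ 2)) := by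
  have hderiv : deriv (fun v => besselSeries 0 (r * (c ^ 2 * t ^ 2 - v ^ 2))) =
      fun v => besselSeries 1 (r * (c ^ 2 * t ^ 2 - v ^ 2)) * (r * -(2 * v)) :=
    funext fun v => (hasDerivAt_besselSeries_space r c 0 t v).deriv
  rw [iteratedDeriv_succ, iteratedDeriv_one, hderiv]
  refine ((hasDerivAt_besselSeries_space r c 1 t u).mul
    (((hasDerivAt_id' u).const_mul 2).fun_neg.const_mul r)).deriv.trans ?_
  ring

lemma hasDerivAt_iteratedDeriv_two_besselSeries_space (u t : ℝ) :
    HasDerivAt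
      (fun s => iteratedDeriv 2 (fun v => besselSeries 0 (r * (c ^ 2 * s ^ 2 - v ^ 2))) u)
      (4 * r ^ 2 * u ^ 2 *
          (besselSeries 3 (r * (c ^ 2 * t ^ 2 - u ^ 2)) * (r * (c ^ 2 * (2 * t)))) -
        2 * r *
          (besselSeries 2 (r * (c ^ 2 * t ^ 2 - u ^ 2)) * (r * (c ^ 2 * (2 * t))))) t := by
  simp only [iteratedDeriv_two_besselSeries_space]
  exact ((hasDerivAt_besselSeries_time r c 2 u t).const_mul _).sub
    ((hasDerivAt_besselSeries_time r c 1 u t).const_mul _)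

end

lemma tsum_odd_mixture_eq_besselSeries (lam c t z a : ℝ) (hc : c ≠ 0) (ht : t ≠ 0) :
    ∑' k : ℕ, Real.exp (-(lam * t)) * (lam * t) ^ (2 * (k + 1) + 1) /
          (Nat.factorial (2 * (k + 1) + 1) : ℝ) *
          ((Nat.factorial (2 * (k + 1) + 1) : ℝ) /
            (2 ^ (2 * (k + 1)) * (c * t) ^ (2 * (k + 1) + 1) *
              (Nat.factorial k : ℝ) * (Nat.factorial (k + 2) : ℝ))) *
          z ^ k * a =
      Real.exp (-(lam * t)) * lam ^ 3 * a / (4 * c ^ 3) *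
        besselSeries 2 ((lam / (2 * c)) ^ 2 * z) := by
  rw [besselSeries, ← tsum_mul_left]
  refine tsum_congr fun k => ?_
  simp only [mul_pow, div_pow, ← pow_mul]
  field_simp
  ring

lemma tsum_even_mixture_eq_besselSeries (lam c t z a : ℝ) (hc : c ≠ 0) (ht : t ≠ 0) :
    ∑' k : ℕ, Real.exp (-(lam * t)) * (lam * t) ^ (2 * (k + 1) + 2) /
          (Nat.factorial (2 * (k + 1) + 2) : ℝ) *
          ((Nat.factorial (2 * (k + 1) + 2) : ℝ) /
            ((Nat.factorial (k + 3) : ℝ) * (Nat.factorial k : ℝ))) *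
          (z ^ k * a) /
          (2 * c * t) ^ (2 * (k + 1) + 1) =
      Real.exp (-(lam * t)) * lam ^ 4 * t * a / (8 * c ^ 3) *
        besselSeries 3 ((lam / (2 * c)) ^ 2 * z) := by
  rw [besselSeries, ← tsum_mul_left]
  refine tsum_congr fun k => ?_
  simp only [mul_pow, div_pow, ← pow_mul]
  field_simp
  ring

theorem density3d_conditional_decomposition_general
    (lam c t u : ℝ) (hc : 0 < c) (ht : 0 < t) :
    Real.exp (-(lam * t)) / c *
        (lam * F lam c u t + deriv (fun s => F lam c u s) t +
          2 * c ^ 2 / lam * iteratedDeriv 2 (fun v => F lam c v t) u +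
          4 * c ^ 2 / lam ^ 2 *
            deriv (fun s => iteratedDeriv 2 (fun v => F lam c v s) u) t) =
      (∑' k : ℕ, Real.exp (-(lam * t)) * (lam * t) ^ (2 * (k + 1) + 1) /
          (Nat.factorial (2 * (k + 1) + 1) : ℝ) *
          ((Nat.factorial (2 * (k + 1) + 1) : ℝ) /
            (2 ^ (2 * (k + 1)) * (c * t) ^ (2 * (k + 1) + 1) *
              (Nat.factorial k : ℝ) * (Nat.factorial (k + 2) : ℝ))) *
          (c ^ 2 * t ^ 2 - u ^ 2) ^ k * (c ^ 2 * t ^ 2 + u ^ 2)) +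
      (∑' k : ℕ, Real.exp (-(lam * t)) * (lam * t) ^ (2 * (k + 1) + 2) /
          (Nat.factorial (2 * (k + 1) + 2) : ℝ) *
          ((Nat.factorial (2 * (k + 1) + 2) : ℝ) /
            ((Nat.factorial (k + 3) : ℝ) * (Nat.factorial k : ℝ))) *
          ((c ^ 2 * t ^ 2 - u ^ 2) ^ k * (c ^ 2 * t ^ 2 + 3 * u ^ 2)) /
          (2 * c * t) ^ (2 * (k + 1) + 1)) := by
  set r := (lam / (2 * c)) ^ 2 with hr
  simp only [F_eq_besselSeries]
  rw [(hasDerivAt_besselSeries_time r c 0 u t).deriv, iteratedDeriv_two_besselSeries_space,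
    (hasDerivAt_iteratedDeriv_two_besselSeries_space r c u t).deriv,
    tsum_odd_mixture_eq_besselSeries _ _ _ _ _ hc.ne' ht.ne',
    tsum_even_mixture_eq_besselSeries _ _ _ _ _ hc.ne' ht.ne']
  have h2 := besselSeries_recurrence 0 (r * (c ^ 2 * t ^ 2 - u ^ 2))
  have h3 := besselSeries_recurrence 1 (r * (c ^ 2 * t ^ 2 - u ^ 2))
  push_cast at h2 h3
  linear_combination (norm := skip)
    -(Real.exp (-(lam * t)) / c) * (lam * h2 + lam ^ 2 * t / 2 * h3)
  rw [hr]
  field_simp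
  ring

/-- The three-dimensional density decomposes as a Poisson mixture of the
conditional densities of `𝒰(t)` given `N(t) = 2k+1` and `N(t) = 2k+2`
(`k ≥ 1`; both series are written with the shift `k ↦ k+1`). -/
theorem density3d_conditional_decomposition
    (lam c t u : ℝ) (hlam : 0 < lam) (hc : 0 < c) (ht : 0 < t)
    (hu0 : 0 < u) (huct : u < c * t) :
    Real.exp (-(lam * t)) / c *
        (lam * F lam c u t + deriv (fun s => F lam c u s) t +
          2 * c ^ 2 / lam * iteratedDeriv 2 (fun v => F lam c v t) u +
          4 * c ^ 2 / lam ^ 2 *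
            deriv (fun s => iteratedDeriv 2 (fun v => F lam c v s) u) t) =
      (∑' k : ℕ, Real.exp (-(lam * t)) * (lam * t) ^ (2 * (k + 1) + 1) /
          (Nat.factorial (2 * (k + 1) + 1) : ℝ) *
          ((Nat.factorial (2 * (k + 1) + 1) : ℝ) /
            (2 ^ (2 * (k + 1)) * (c * t) ^ (2 * (k + 1) + 1) *
              (Nat.factorial k : ℝ) * (Nat.factorial (k + 2) : ℝ))) *
          (c ^ 2 * t ^ 2 - u ^ 2) ^ k * (c ^ 2 * t ^ 2 + u ^ 2)) +
      (∑' k : ℕ, Real.exp (-(lam * t)) * (lam * t) ^ (2 * (k + 1) + 2) /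
          (Nat.factorial (2 * (k + 1) + 2) : ℝ) *
          ((Nat.factorial (2 * (k + 1) + 2) : ℝ) /
            ((Nat.factorial (k + 3) : ℝ) * (Nat.factorial k : ℝ))) *
          ((c ^ 2 * t ^ 2 - u ^ 2) ^ k * (c ^ 2 * t ^ 2 + 3 * u ^ 2)) /
          (2 * c * t) ^ (2 * (k + 1) + 1)) :=
  density3d_conditional_decomposition_general lam c t u hc ht
end

section
/- Let c > 0, t > 0 and let k ≥ 1 be an integer. Then (i) ∫₀^{ct} u · ((2k+1)!/(2^{2k}(ct)^{2k+1}(k−1)!(k+1)!)) (c²t² − u²)^{k−1}(c²t² + u²) du = ((2k+1)!(k+2)/(2^{2k+1}((k+1)!)²)) · ct, and (ii) ∫₀^{ct} u · ((2k+2)!/((k+2)!(k−1)!(2ct)^{2k+1})) (c²t² − u²)^{k−1}(c²t² + 3u²) du = ((2k+1)!(k+4)/(2^{2k+1} k!(k+2)!)) · ct. Equivalently, (i) equals C(2k+1, k+1)·(ct/2^{2k+1})·(k+2)/(k+1) and (ii) equals C(2k+1, k+1)·(ct/2^{2k+1})·(k+4)/(k+2), where C(·,·) is the binomial coefficient. 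-/
/-!
With `a = c t`, both conditional densities are constant multiples of
`u ↦ (a² - u²)^m (a² + β u²)` with `m = k - 1` and `β ∈ {1, 3}`, so both means reduce to the
first moment `∫₀^a u (a² - u²)^m (a² + β u²) du`. That integrand has the explicit primitive
`-(a² - u²)^(m+1) (A + B u²)`, with `B = β / (2(m+2))` and `A = a² (m+β+2) / (2(m+1)(m+2))`,
which gives the moment `a^(2m+4) (m+β+2) / (2(m+1)(m+2))`. The rest is factorial arithmetic.
-/

open intervalIntegral Nat

theorem integral_mul_sub_sq_pow_mul_add_sq (a β : ℝ) (m : ℕ) :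
    ∫ u in (0 : ℝ)..a, u * (a ^ 2 - u ^ 2) ^ m * (a ^ 2 + β * u ^ 2) =
      a ^ (2 * m + 4) * ((m + β + 2) / (2 * (m + 1) * (m + 2))) := by
  set A : ℝ := a ^ 2 * (m + β + 2) / (2 * (m + 1) * (m + 2))
  set B : ℝ := β / (2 * (m + 2))
  have hprimitive : ∀ x ∈ Set.uIcc (0 : ℝ) a,
      HasDerivAt (fun u => -((a ^ 2 - u ^ 2) ^ (m + 1) * (A + B * u ^ 2)))
        (x * (a ^ 2 - x ^ 2) ^ m * (a ^ 2 + β * x ^ 2)) x := by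
    intro x _
    have hbase : HasDerivAt (fun u : ℝ => a ^ 2 - u ^ 2) (-(2 * x)) x := by
      simpa using (hasDerivAt_pow 2 x).const_sub (a ^ 2)
    have hquad : HasDerivAt (fun u : ℝ => A + B * u ^ 2) (B * (2 * x)) x := by
      simpa [mul_comm] using ((hasDerivAt_pow 2 x).const_mul B).const_add A
    refine ((hbase.pow (m + 1)).mul hquad).neg.congr_deriv ?_
    simp only [Nat.add_sub_cancel, Pi.pow_apply, A, B]
    field_simp
    push_cast
    ring
  rw [integral_eq_sub_of_hasDerivAt hprimitive (by apply Continuous.intervalIntegrable; fun_prop)]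
  simp only [A]
  ring

theorem integral_mul_div_pow_mul_sub_sq_pow_mul_add_sq (a β K : ℝ) (m : ℕ) :
    ∫ u in (0 : ℝ)..a, u * (K / a ^ (2 * m + 3)) * (a ^ 2 - u ^ 2) ^ m * (a ^ 2 + β * u ^ 2) =
      K * ((m + β + 2) / (2 * (m + 1) * (m + 2))) * a := by
  have hpow : a ^ (2 * m + 4) / a ^ (2 * m + 3) = a := by
    rcases eq_or_ne a 0 with rfl | ha
    · simp
    · rw [pow_succ _ (2 * m + 3), mul_div_cancel_left₀ _ (pow_ne_zero _ ha)]
  calc _ = K / a ^ (2 * m + 3) *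
        ∫ u in (0 : ℝ)..a, u * (a ^ 2 - u ^ 2) ^ m * (a ^ 2 + β * u ^ 2) := by
        rw [← integral_const_mul]
        congr 1 with u
        ring
    _ = K * ((m + β + 2) / (2 * (m + 1) * (m + 2))) * (a ^ (2 * m + 4) / a ^ (2 * m + 3)) := by
        rw [integral_mul_sub_sq_pow_mul_add_sq]
        ring
    _ = _ := by rw [hpow]

theorem factorial_two_mul_add_one_eq_choose_mul (k : ℕ) :
    (2 * k + 1)! = (2 * k + 1).choose (k + 1) * (k + 1)! * k ! := by
  have h := Nat.choose_mul_factorial_mul_factorial (by omega : k + 1 ≤ 2 * k + 1)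
  rwa [show 2 * k + 1 - (k + 1) = k by omega, eq_comm] at h

theorem conditional_means_3d_general
    (c t : ℝ) (k : ℕ) (hk : 1 ≤ k) :
    ((∫ u in (0 : ℝ)..(c * t),
        u * ((Nat.factorial (2 * k + 1) : ℝ) /
            (2 ^ (2 * k) * (c * t) ^ (2 * k + 1) *
              (Nat.factorial (k - 1) : ℝ) * (Nat.factorial (k + 1) : ℝ))) *
          (c ^ 2 * t ^ 2 - u ^ 2) ^ (k - 1) * (c ^ 2 * t ^ 2 + u ^ 2)) =
      (Nat.factorial (2 * k + 1) : ℝ) * ((k : ℝ) + 2) /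
        (2 ^ (2 * k + 1) * ((Nat.factorial (k + 1) : ℝ)) ^ 2) * (c * t)) ∧
    ((∫ u in (0 : ℝ)..(c * t),
        u * ((Nat.factorial (2 * k + 2) : ℝ) /
            ((Nat.factorial (k + 2) : ℝ) * (Nat.factorial (k - 1) : ℝ) *
              (2 * c * t) ^ (2 * k + 1))) *
          (c ^ 2 * t ^ 2 - u ^ 2) ^ (k - 1) * (c ^ 2 * t ^ 2 + 3 * u ^ 2)) =
      (Nat.factorial (2 * k + 1) : ℝ) * ((k : ℝ) + 4) /
        (2 ^ (2 * k + 1) * (Nat.factorial k : ℝ) * (Nat.factorial (k + 2) : ℝ)) *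
        (c * t)) ∧
    ((Nat.factorial (2 * k + 1) : ℝ) * ((k : ℝ) + 2) /
        (2 ^ (2 * k + 1) * ((Nat.factorial (k + 1) : ℝ)) ^ 2) * (c * t) =
      (Nat.choose (2 * k + 1) (k + 1) : ℝ) * (c * t / 2 ^ (2 * k + 1)) *
        (((k : ℝ) + 2) / ((k : ℝ) + 1))) ∧
    ((Nat.factorial (2 * k + 1) : ℝ) * ((k : ℝ) + 4) /
        (2 ^ (2 * k + 1) * (Nat.factorial k : ℝ) * (Nat.factorial (k + 2) : ℝ)) *
        (c * t) =
      (Nat.choose (2 * k + 1) (k + 1) : ℝ) * (c * t / 2 ^ (2 * k + 1)) *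
        (((k : ℝ) + 4) / ((k : ℝ) + 2))) := by
  obtain ⟨m, rfl⟩ := Nat.exists_eq_add_of_le' hk
  have hsq : c ^ 2 * t ^ 2 = (c * t) ^ 2 := by ring
  simp only [Nat.add_sub_cancel]
  rw [hsq]
  refine ⟨?_, ?_, ?_, ?_⟩
  · have := integral_mul_div_pow_mul_sub_sq_pow_mul_add_sq (c * t) 1
      (((2 * (m + 1) + 1)! : ℝ) / (2 ^ (2 * (m + 1)) * m ! * (m + 1 + 1)!)) m
    simp only [one_mul] at this
    convert this using 2
    · funext u
      ring
    · rw [Nat.factorial_succ (m + 1), Nat.factorial_succ m]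
      push_cast
      field_simp
      ring
  · have := integral_mul_div_pow_mul_sub_sq_pow_mul_add_sq (c * t) 3
      (((2 * (m + 1) + 2)! : ℝ) / (2 ^ (2 * (m + 1) + 1) * (m + 1 + 2)! * m !)) m
    convert this using 2
    · funext u
      ring
    · rw [show 2 * (m + 1) + 2 = 2 * (m + 1) + 1 + 1 from rfl, Nat.factorial_succ (2 * (m + 1) + 1),
        show m + 1 + 2 = m + 2 + 1 from rfl, Nat.factorial_succ (m + 2), Nat.factorial_succ (m + 1),
        Nat.factorial_succ m]
      push_cast
      field_simp
      ring
  · rw [factorial_two_mul_add_one_eq_choose_mul, Nat.factorial_succ (m + 1)]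
    push_cast
    field_simp
  · rw [factorial_two_mul_add_one_eq_choose_mul, show m + 1 + 2 = m + 2 + 1 from rfl,
      Nat.factorial_succ (m + 2), Nat.factorial_succ (m + 1)]
    push_cast
    field_simp
    ring

theorem conditional_means_3d
    (c t : ℝ) (hc : 0 < c) (ht : 0 < t) (k : ℕ) (hk : 1 ≤ k) :
    ((∫ u in (0 : ℝ)..(c * t),
        u * ((Nat.factorial (2 * k + 1) : ℝ) /
            (2 ^ (2 * k) * (c * t) ^ (2 * k + 1) *
              (Nat.factorial (k - 1) : ℝ) * (Nat.factorial (k + 1) : ℝ))) *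
          (c ^ 2 * t ^ 2 - u ^ 2) ^ (k - 1) * (c ^ 2 * t ^ 2 + u ^ 2)) =
      (Nat.factorial (2 * k + 1) : ℝ) * ((k : ℝ) + 2) /
        (2 ^ (2 * k + 1) * ((Nat.factorial (k + 1) : ℝ)) ^ 2) * (c * t)) ∧
    ((∫ u in (0 : ℝ)..(c * t),
        u * ((Nat.factorial (2 * k + 2) : ℝ) /
            ((Nat.factorial (k + 2) : ℝ) * (Nat.factorial (k - 1) : ℝ) *
              (2 * c * t) ^ (2 * k + 1))) *
          (c ^ 2 * t ^ 2 - u ^ 2) ^ (k - 1) * (c ^ 2 * t ^ 2 + 3 * u ^ 2)) =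
      (Nat.factorial (2 * k + 1) : ℝ) * ((k : ℝ) + 4) /
        (2 ^ (2 * k + 1) * (Nat.factorial k : ℝ) * (Nat.factorial (k + 2) : ℝ)) *
        (c * t)) ∧
    ((Nat.factorial (2 * k + 1) : ℝ) * ((k : ℝ) + 2) /
        (2 ^ (2 * k + 1) * ((Nat.factorial (k + 1) : ℝ)) ^ 2) * (c * t) =
      (Nat.choose (2 * k + 1) (k + 1) : ℝ) * (c * t / 2 ^ (2 * k + 1)) *
        (((k : ℝ) + 2) / ((k : ℝ) + 1))) ∧
    ((Nat.factorial (2 * k + 1) : ℝ) * ((k : ℝ) + 4) /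
        (2 ^ (2 * k + 1) * (Nat.factorial k : ℝ) * (Nat.factorial (k + 2) : ℝ)) *
        (c * t) =
      (Nat.choose (2 * k + 1) (k + 1) : ℝ) * (c * t / 2 ^ (2 * k + 1)) *
        (((k : ℝ) + 4) / ((k : ℝ) + 2))) :=
  conditional_means_3d_general c t k hk
end
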